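/- arXiv:1901.00165 — 3 statements merged into one kernel-verified Lean document; each statement's English description precedes it below -/
import Mathlib

section
/- The function t ↦ ∫_Ω Φ(t|g|) dμ is differentiable at every t > 0, with derivative equal to ∫_Ω φ(t|g(x)|)·|g(x)| dμ(x). -/
open MeasureTheory Set Filter Topology Real

/-!
Differentiation under the integral sign. For `τ` near `t` the `τ`-derivative `φ (τ |g|) |g|` of
`Φ (τ |g|)` is dominated by a multiple of the integrable function `Φ (|g|)`. Indeed, monotonicity
of `φ` gives `u φ(u) ≤ Φ(2u)`, and the bound `t φ'(t) / φ(t) ≤ a₊` makes `φ(w) w^(-a₊)`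
nonincreasing, so that `φ(cs) ≤ c^a₊ φ(s)` and hence `Φ(cs) ≤ c^(a₊+1) Φ(s)` for `c ≥ 1`.
-/

section Growth

variable {φ φ' : ℝ → ℝ} {p : ℝ}

theorem antitoneOn_mul_rpow_neg (hderiv : ∀ w, 0 < w → HasDerivAt φ (φ' w) w)
    (hratio : ∀ w, 0 < w → w * φ' w ≤ p * φ w) :
    AntitoneOn (fun w => φ w * w ^ (-p)) (Ioi 0) := by
  have hder : ∀ w, 0 < w → HasDerivAt (fun w => φ w * w ^ (-p))
      (w ^ (-p - 1) * (w * φ' w - p * φ w)) w := by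
    intro w hw
    refine ((hderiv w hw).mul (hasDerivAt_rpow_const (p := -p) (Or.inl hw.ne'))).congr_deriv ?_
    rw [show w ^ (-p) = w ^ (-p - 1) * w by rw [← rpow_add_one hw.ne']; ring_nf]
    ring
  refine antitoneOn_of_hasDerivWithinAt_nonpos
    (f' := fun w => w ^ (-p - 1) * (w * φ' w - p * φ w)) (convex_Ioi 0)
    (fun w hw => (hder w hw).continuousAt.continuousWithinAt) (fun w hw => ?_) (fun w hw => ?_)
  · rw [interior_Ioi] at hw
    exact (hder w hw).hasDerivWithinAt
  · rw [interior_Ioi] at hw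
    exact mul_nonpos_of_nonneg_of_nonpos (rpow_nonneg (le_of_lt hw) _)
      (sub_nonpos.2 (hratio w hw))

theorem le_rpow_mul_of_antitoneOn_mul_rpow_neg
    (hanti : AntitoneOn (fun w => φ w * w ^ (-p)) (Ioi 0))
    {c s : ℝ} (hc : 1 ≤ c) (hs : 0 < s) : φ (c * s) ≤ c ^ p * φ s := by
  have hc0 : 0 < c := one_pos.trans_le hc
  have hcs : 0 < c * s := mul_pos hc0 hs
  have h := hanti hs hcs (le_mul_of_one_le_left hs.le hc)
  simp only [rpow_neg hcs.le, rpow_neg hs.le, ← div_eq_mul_inv] at h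
  rw [div_le_div_iff₀ (rpow_pos_of_pos hcs p) (rpow_pos_of_pos hs p),
    mul_rpow hc0.le hs.le] at h
  nlinarith [rpow_pos_of_pos hs p]

end Growth

noncomputable def absPrimitive (φ : ℝ → ℝ) (t : ℝ) : ℝ := ∫ s in (0 : ℝ)..|t|, φ s

namespace absPrimitive

variable {φ : ℝ → ℝ}

theorem nonneg (hφ : ∀ s, 0 ≤ s → 0 ≤ φ s) (t : ℝ) : 0 ≤ absPrimitive φ t :=
  intervalIntegral.integral_nonneg (abs_nonneg t) fun s hs => hφ s hs.1

theorem continuous (hcont : Continuous φ) : Continuous (absPrimitive φ) :=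
  (intervalIntegral.continuous_primitive (fun _ _ => hcont.intervalIntegrable _ _) 0).comp
    continuous_abs

theorem hasDerivAt (hcont : Continuous φ) {u : ℝ} (hu : 0 < u) :
    HasDerivAt (absPrimitive φ) (φ u) u :=
  (hcont.integral_hasStrictDerivAt 0 u).hasDerivAt.congr_of_eventuallyEq <| by
    filter_upwards [lt_mem_nhds hu] with v hv
    rw [absPrimitive, abs_of_pos hv]

theorem monotoneOn (hcont : Continuous φ) (hφ : ∀ s, 0 ≤ s → 0 ≤ φ s) :
    MonotoneOn (absPrimitive φ) (Ici 0) := fun u hu v hv huv => by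
  rw [absPrimitive, absPrimitive, abs_of_nonneg hu, abs_of_nonneg hv]
  exact intervalIntegral.integral_mono_interval le_rfl hu huv
    (ae_restrict_of_forall_mem measurableSet_Ioc fun s hs => hφ s hs.1.le)
    (hcont.intervalIntegrable _ _)

theorem mul_le_two_mul (hcont : Continuous φ) (hmono : Monotone φ) (hφ : ∀ s, 0 ≤ s → 0 ≤ φ s)
    {u : ℝ} (hu : 0 ≤ u) : u * φ u ≤ absPrimitive φ (2 * u) := by
  have hint := hcont.intervalIntegrable (μ := volume)
  have hmid : u * φ u ≤ ∫ s in u..2 * u, φ s := by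
    simpa [show 2 * u - u = u by ring] using
      intervalIntegral.integral_mono_on (by linarith) intervalIntegrable_const (hint u (2 * u))
        fun s hs => hmono hs.1
  have hfirst : 0 ≤ ∫ s in (0 : ℝ)..u, φ s :=
    intervalIntegral.integral_nonneg hu fun s hs => hφ s hs.1
  rw [absPrimitive, abs_of_nonneg (by linarith),
    ← intervalIntegral.integral_add_adjacent_intervals (hint 0 u) (hint u (2 * u))]
  linarith

theorem mul_le_rpow_mul (hcont : Continuous φ) {p : ℝ}
    (hgrowth : ∀ c s, 1 ≤ c → 0 < s → φ (c * s) ≤ c ^ p * φ s) {c s : ℝ} (hc : 1 ≤ c)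
    (hs : 0 ≤ s) : absPrimitive φ (c * s) ≤ c ^ (p + 1) * absPrimitive φ s := by
  have hc0 : 0 < c := one_pos.trans_le hc
  have hscaled : ∫ x in (0 : ℝ)..s, φ (c * x) ≤ c ^ p * ∫ x in (0 : ℝ)..s, φ x := by
    rw [← intervalIntegral.integral_const_mul]
    exact intervalIntegral.integral_mono_on_of_le_Ioo hs
      ((hcont.comp (continuous_const_mul c)).intervalIntegrable _ _)
      ((continuous_const.mul hcont).intervalIntegrable _ _)
      fun x hx => hgrowth c x hc hx.1
  have hsubst := intervalIntegral.smul_integral_comp_mul_left (f := φ) (a := 0) (b := s) c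
  rw [mul_zero, smul_eq_mul] at hsubst
  rw [absPrimitive, absPrimitive, abs_of_nonneg (mul_nonneg hc0.le hs), abs_of_nonneg hs, ← hsubst,
    rpow_add_one hc0.ne', mul_comm (c ^ p) c, mul_assoc]
  exact mul_le_mul_of_nonneg_left hscaled hc0.le

theorem exists_mul_le (hcont : Continuous φ) (hφ : ∀ s, 0 ≤ s → 0 ≤ φ s) {p : ℝ}
    (hgrowth : ∀ c s, 1 ≤ c → 0 < s → φ (c * s) ≤ c ^ p * φ s) {c : ℝ} (hc : 0 < c) :
    ∃ K, ∀ s, 0 ≤ s → absPrimitive φ (c * s) ≤ K * absPrimitive φ s := by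
  refine ⟨max c 1 ^ (p + 1), fun s hs => ?_⟩
  calc absPrimitive φ (c * s) ≤ absPrimitive φ (max c 1 * s) :=
        monotoneOn hcont hφ (mul_nonneg hc.le hs) (mul_nonneg (hc.le.trans (le_max_left c 1)) hs)
          (by gcongr; exact le_max_left c 1)
    _ ≤ max c 1 ^ (p + 1) * absPrimitive φ s := mul_le_rpow_mul hcont hgrowth (le_max_right c 1) hs

theorem apply_mul_mul_le_div (hcont : Continuous φ) (hmono : Monotone φ)
    (hφ : ∀ s, 0 ≤ s → 0 ≤ φ s) {τ c s : ℝ} (hτc : τ ≤ c) (hc : 0 < c) (hs : 0 ≤ s) :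
    φ (τ * s) * s ≤ absPrimitive φ (2 * c * s) / c := by
  rw [le_div_iff₀ hc, mul_assoc 2]
  calc φ (τ * s) * s * c ≤ φ (c * s) * s * c := by gcongr; exact hmono (by gcongr)
    _ = c * s * φ (c * s) := by ring
    _ ≤ absPrimitive φ (2 * (c * s)) := mul_le_two_mul hcont hmono hφ (mul_nonneg hc.le hs)

theorem hasDerivAt_integral_mul {Ω : Type*} [MeasurableSpace Ω] {μ : Measure Ω}
    (hcont : Continuous φ) (hmono : Monotone φ) (hφ : ∀ s, 0 ≤ s → 0 ≤ φ s)
    (hscale : ∀ c, 0 < c → ∃ K, ∀ s, 0 ≤ s → absPrimitive φ (c * s) ≤ K * absPrimitive φ s)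
    {h : Ω → ℝ} (hh : Measurable h) (h_nonneg : ∀ x, 0 ≤ h x)
    (hint : Integrable (fun x => absPrimitive φ (h x)) μ) {t : ℝ} (ht : 0 < t) :
    HasDerivAt (fun τ => ∫ x, absPrimitive φ (τ * h x) ∂μ) (∫ x, φ (t * h x) * h x ∂μ) t := by
  obtain ⟨K₁, hK₁⟩ := hscale t ht
  obtain ⟨K₂, hK₂⟩ := hscale (2 * (2 * t)) (by positivity)
  have hmeas : ∀ τ, AEStronglyMeasurable (fun x => absPrimitive φ (τ * h x)) μ := fun τ =>
    ((continuous hcont).measurable.comp (hh.const_mul τ)).aestronglyMeasurable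
  have hint_t : Integrable (fun x => absPrimitive φ (t * h x)) μ :=
    (hint.const_mul K₁).mono' (hmeas t) <| Eventually.of_forall fun x => by
      rw [norm_of_nonneg (nonneg hφ _)]
      exact hK₁ _ (h_nonneg x)
  have hball : ∀ τ ∈ Metric.ball t (t / 2), 0 < τ ∧ τ ≤ 2 * t := fun τ hτ => by
    rw [Metric.mem_ball, Real.dist_eq, abs_lt] at hτ
    constructor <;> linarith
  have hbound : ∀ x, ∀ τ ∈ Metric.ball t (t / 2),
      ‖φ (τ * h x) * h x‖ ≤ K₂ * absPrimitive φ (h x) / (2 * t) := fun x τ hτ => by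
    have hτ := hball τ hτ
    rw [norm_of_nonneg (mul_nonneg (hφ _ (mul_nonneg hτ.1.le (h_nonneg x))) (h_nonneg x))]
    exact (apply_mul_mul_le_div hcont hmono hφ hτ.2 (by positivity) (h_nonneg x)).trans
      (div_le_div_of_nonneg_right (hK₂ _ (h_nonneg x)) (by positivity))
  have hdiff : ∀ x, ∀ τ ∈ Metric.ball t (t / 2),
      HasDerivAt (fun τ' => absPrimitive φ (τ' * h x)) (φ (τ * h x) * h x) τ := fun x τ hτ => by
    rcases (h_nonneg x).eq_or_lt with hx | hx
    · simpa [← hx] using hasDerivAt_const τ (absPrimitive φ 0)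
    · exact (hasDerivAt hcont (mul_pos (hball τ hτ).1 hx)).comp τ (hasDerivAt_mul_const _)
  exact (hasDerivAt_integral_of_dominated_loc_of_deriv_le (Metric.ball_mem_nhds t (half_pos ht))
    (Eventually.of_forall hmeas) hint_t
    ((hcont.measurable.comp (hh.const_mul t)).mul hh).aestronglyMeasurable
    (Eventually.of_forall hbound) ((hint.const_mul K₂).div_const _)
    (Eventually.of_forall hdiff)).2

end absPrimitive

theorem hasDerivAt_integral_Phi_mul_abs_general
    {Ω : Type*} [MeasurableSpace Ω] (μ : Measure Ω)
    (φ φ' : ℝ → ℝ) (am ap : ℝ)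
    (hodd : ∀ t : ℝ, φ (-t) = -φ t)
    (hmono : StrictMono φ)
    (hcont : Continuous φ)
    (hpos : ∀ t : ℝ, 0 < t → 0 < φ t)
    (hderiv : ∀ t : ℝ, 0 < t → HasDerivAt φ (φ' t) t)
    (hratio : ∀ t : ℝ, 0 < t → am ≤ t * φ' t / φ t ∧ t * φ' t / φ t ≤ ap)
    (Φ : ℝ → ℝ) (hΦ : ∀ t : ℝ, Φ t = ∫ s in (0:ℝ)..|t|, φ s)
    (g : Ω → ℝ) (hg : Measurable g)
    (hgint : Integrable (fun x => Φ |g x|) μ) :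
    ∀ t : ℝ, 0 < t →
      HasDerivAt (fun τ : ℝ => ∫ x, Φ (τ * |g x|) ∂μ)
        (∫ x, φ (t * |g x|) * |g x| ∂μ) t := by
  intro t ht
  obtain rfl : Φ = absPrimitive φ := funext hΦ
  have hφ0 : φ 0 = 0 := by linarith [neg_zero (G := ℝ) ▸ hodd 0]
  have hφ : ∀ s, 0 ≤ s → 0 ≤ φ s := fun s hs => hφ0 ▸ hmono.monotone hs
  have hgrowth : ∀ c s, 1 ≤ c → 0 < s → φ (c * s) ≤ c ^ ap * φ s := fun c s hc hs =>
    le_rpow_mul_of_antitoneOn_mul_rpow_neg (antitoneOn_mul_rpow_neg hderiv fun w hw =>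
      (div_le_iff₀ (hpos w hw)).1 (hratio w hw).2) hc hs
  exact absPrimitive.hasDerivAt_integral_mul hcont hmono.monotone hφ
    (fun c hc => absPrimitive.exists_mul_le hcont hφ hgrowth hc) hg.abs (fun x => abs_nonneg _)
    hgint ht

/-- Under hypotheses (φ0)–(φ1), for a measurable `g` with
`∫ Φ(|g|) dμ < ∞`, the function `t ↦ ∫ Φ(t|g|) dμ` is differentiable at every
`t > 0`, with derivative `∫ φ(t|g x|)·|g x| dμ(x)`.  Here `Φ t = ∫ s in 0..|t|, φ s`
and `a₋, a₊` are written `am, ap`. -/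
theorem hasDerivAt_integral_Phi_mul_abs
    {Ω : Type*} [MeasurableSpace Ω] (μ : Measure Ω)
    (φ φ' : ℝ → ℝ) (am ap : ℝ)
    (hodd : ∀ t : ℝ, φ (-t) = -φ t)
    (hmono : StrictMono φ)
    (hcont : Continuous φ)
    (hsurj : Function.Surjective φ)
    (hpos : ∀ t : ℝ, 0 < t → 0 < φ t)
    (hderiv : ∀ t : ℝ, 0 < t → HasDerivAt φ (φ' t) t)
    (ham : 0 < am) (hamap : am ≤ ap)
    (hratio : ∀ t : ℝ, 0 < t → am ≤ t * φ' t / φ t ∧ t * φ' t / φ t ≤ ap)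
    (Φ : ℝ → ℝ) (hΦ : ∀ t : ℝ, Φ t = ∫ s in (0:ℝ)..|t|, φ s)
    (g : Ω → ℝ) (hg : Measurable g)
    (hgint : Integrable (fun x => Φ |g x|) μ) :
    ∀ t : ℝ, 0 < t →
      HasDerivAt (fun τ : ℝ => ∫ x, Φ (τ * |g x|) ∂μ)
        (∫ x, φ (t * |g x|) * |g x| ∂μ) t :=
  hasDerivAt_integral_Phi_mul_abs_general μ φ φ' am ap hodd hmono hcont hpos hderiv hratio Φ hΦ g hg
    hgint
end

section
/- The function σ : (0,∞) → ℝ defined by σ(t) = ∫_Ω Φ(t|g|) dμ + (B/(δ−1))·t^{1−δ} is strictly convex on (0,∞), satisfies σ(t) → ∞ as t → 0⁺ and σ(t) → ∞ as t → ∞, and attains its global minimum over (0,∞) at a unique point t_* > 0 (abstract form of Lemma 4.1 of the paper). -/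
open MeasureTheory Set Filter Topology Real

/-!
On `[0, ∞)`, `Φ` is the primitive of the increasing function `φ`, hence convex with `Φ 0 = 0`.
The bound `t φ'(t) ≤ a₊ φ(t)` makes `φ(t) t^(-a₊)` decreasing, which gives the growth bound
`Φ(l s) ≤ l^(a₊+1) Φ(s)` for `l ≥ 1`; so `t ↦ ∫ Φ(t|g|) dμ` is finite and convex, and convexity
with `Φ 0 = 0` makes it grow at least linearly. Adding the strictly convex term
`t^(1-δ)`, which blows up at `0⁺`, gives a strictly convex function tending to `∞` at both ends of
`(0, ∞)`; after the substitution `t = exp x` the extreme value theorem gives a minimiser, unique by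
strict convexity.
-/

theorem antitoneOn_mul_rpow_neg_of_mul_deriv_div_le {φ φ' : ℝ → ℝ} {p : ℝ}
    (hpos : ∀ t, 0 < t → 0 < φ t) (hderiv : ∀ t, 0 < t → HasDerivAt φ (φ' t) t)
    (hratio : ∀ t, 0 < t → t * φ' t / φ t ≤ p) :
    AntitoneOn (fun t => φ t * t ^ (-p)) (Ioi 0) := by
  have hd : ∀ t ∈ Ioi (0:ℝ),
      HasDerivAt (fun t => φ t * t ^ (-p)) (φ' t * t ^ (-p) + φ t * (-p * t ^ (-p - 1))) t :=
    fun t ht => (hderiv t ht).mul (hasDerivAt_rpow_const (Or.inl (ne_of_gt ht)))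
  refine antitoneOn_of_hasDerivWithinAt_nonpos (convex_Ioi 0)
    (fun t ht => (hd t ht).continuousAt.continuousWithinAt)
    (fun t ht => (hd t (interior_subset ht)).hasDerivWithinAt) fun t ht => ?_
  rw [interior_Ioi] at ht
  have hφt : t * φ' t ≤ p * φ t := by
    have := (div_le_iff₀ (hpos t ht)).mp (hratio t ht)
    linarith
  rw [rpow_sub_one (ne_of_gt ht)]
  have key : φ' t * t ^ (-p) + φ t * (-p * (t ^ (-p) / t)) =
      (t * φ' t - p * φ t) * (t ^ (-p) / t) := by
    field_simp [ne_of_gt (mem_Ioi.mp ht)]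
    ring
  rw [key]
  exact mul_nonpos_of_nonpos_of_nonneg (by linarith) (div_nonneg (rpow_nonneg ht.le _) ht.le)

theorem le_rpow_mul_of_mul_deriv_div_le {φ φ' : ℝ → ℝ} {p : ℝ}
    (hpos : ∀ t, 0 < t → 0 < φ t) (hderiv : ∀ t, 0 < t → HasDerivAt φ (φ' t) t)
    (hratio : ∀ t, 0 < t → t * φ' t / φ t ≤ p) {l s : ℝ} (hl : 1 ≤ l) (hs : 0 < s) :
    φ (l * s) ≤ l ^ p * φ s := by
  have hl0 : 0 < l := one_pos.trans_le hl
  have h := antitoneOn_mul_rpow_neg_of_mul_deriv_div_le hpos hderiv hratio hs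
    (mul_pos hl0 hs) (le_mul_of_one_le_left hs.le hl)
  simp only [mul_rpow hl0.le hs.le, rpow_neg hl0.le, rpow_neg hs.le] at h
  have := rpow_pos_of_pos hl0 p
  have := rpow_pos_of_pos hs p
  field_simp at h
  linarith

theorem primitive_mul_le_rpow_mul {φ : ℝ → ℝ} {p : ℝ} (hcont : Continuous φ)
    (hφ : ∀ l s, 1 ≤ l → 0 < s → φ (l * s) ≤ l ^ p * φ s) {l s : ℝ} (hl : 1 ≤ l) (hs : 0 ≤ s) :
    ∫ u in (0:ℝ)..l * s, φ u ≤ l ^ (p + 1) * ∫ u in (0:ℝ)..s, φ u := by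
  have hl0 : 0 < l := one_pos.trans_le hl
  have hsubst : ∫ u in (0:ℝ)..l * s, φ u = l * ∫ u in (0:ℝ)..s, φ (l * u) := by
    rw [intervalIntegral.integral_comp_mul_left _ hl0.ne', mul_zero, smul_eq_mul,
      mul_inv_cancel_left₀ hl0.ne']
  calc ∫ u in (0:ℝ)..l * s, φ u = l * ∫ u in (0:ℝ)..s, φ (l * u) := hsubst
    _ ≤ l * ∫ u in (0:ℝ)..s, l ^ p * φ u := by
      gcongr
      exact intervalIntegral.integral_mono_on_of_le_Ioo hs
        ((hcont.comp (continuous_const_mul l)).intervalIntegrable _ _)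
        ((hcont.intervalIntegrable _ _).const_mul _) fun u hu => hφ l u hl hu.1
    _ = l ^ (p + 1) * ∫ u in (0:ℝ)..s, φ u := by
      rw [intervalIntegral.integral_const_mul, rpow_add_one hl0.ne']
      ring

theorem convexOn_primitive_of_monotone {φ : ℝ → ℝ} (hcont : Continuous φ) (hmono : Monotone φ) :
    ConvexOn ℝ univ fun t => ∫ u in (0:ℝ)..t, φ u :=
  Monotone.convexOn_univ_of_deriv
    (fun t => (hcont.integral_hasStrictDerivAt 0 t).hasDerivAt.differentiableAt)
    (by rwa [funext (hcont.deriv_integral φ 0)])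

theorem ConvexOn.map_smul_le_of_map_zero {E : Type*} [AddCommGroup E] [Module ℝ E]
    {s : Set E} {f : E → ℝ} (hf : ConvexOn ℝ s f) (h0 : 0 ∈ s) (hf0 : f 0 = 0) {x : E}
    (hx : x ∈ s) {a : ℝ} (ha0 : 0 ≤ a) (ha1 : a ≤ 1) : f (a • x) ≤ a * f x := by
  simpa [hf0] using hf.2 hx h0 ha0 (sub_nonneg.mpr ha1) (add_sub_cancel a 1)

/-- Conditions on `[0, ∞)` only; `le_rpow_mul` is the `Δ₂` condition with exponent `p`. -/
structure IsDeltaTwoYoungFunction (Φ : ℝ → ℝ) (p : ℝ) : Prop where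
  continuous : Continuous Φ
  convexOn : ConvexOn ℝ (Ici 0) Φ
  map_zero : Φ 0 = 0
  nonneg : ∀ s, 0 ≤ s → 0 ≤ Φ s
  le_rpow_mul : ∀ l s, 1 ≤ l → 0 ≤ s → Φ (l * s) ≤ l ^ p * Φ s

theorem isDeltaTwoYoungFunction_primitive_abs {φ φ' : ℝ → ℝ} {p : ℝ} (hmono : Monotone φ)
    (hcont : Continuous φ) (hpos : ∀ t, 0 < t → 0 < φ t)
    (hderiv : ∀ t, 0 < t → HasDerivAt φ (φ' t) t) (hratio : ∀ t, 0 < t → t * φ' t / φ t ≤ p) :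
    IsDeltaTwoYoungFunction (fun t => ∫ u in (0:ℝ)..|t|, φ u) (p + 1) := by
  have habs : ∀ s, 0 ≤ s → ∫ u in (0:ℝ)..|s|, φ u = ∫ u in (0:ℝ)..s, φ u := fun s hs => by
    rw [abs_of_nonneg hs]
  refine ⟨(intervalIntegral.continuous_primitive hcont.intervalIntegrable 0).comp continuous_abs,
    ((convexOn_primitive_of_monotone hcont hmono).subset (subset_univ _) (convex_Ici 0)).congr
      fun s hs => (habs s hs).symm, by simp, fun s hs => ?_, fun l s hl hs => ?_⟩
  · simpa [habs s hs] using intervalIntegral.integral_mono_on_of_le_Ioo hs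
      intervalIntegrable_const (hcont.intervalIntegrable _ _) fun u hu => (hpos u hu.1).le
  · rw [habs s hs, habs (l * s) (mul_nonneg (zero_le_one.trans hl) hs)]
    exact primitive_mul_le_rpow_mul hcont
      (fun l s hl hs => le_rpow_mul_of_mul_deriv_div_le hpos hderiv hratio hl hs) hl hs

section IntegralOfComposition

variable {Ω : Type*} [MeasurableSpace Ω] {μ : Measure Ω} {Φ : ℝ → ℝ} {f : Ω → ℝ}

theorem IsDeltaTwoYoungFunction.integrable_comp_const_mul {p : ℝ}
    (hΦ : IsDeltaTwoYoungFunction Φ p) (hf : AEStronglyMeasurable f μ) (hf0 : ∀ x, 0 ≤ f x)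
    (hint : Integrable (fun x => Φ (f x)) μ) {t : ℝ} (ht : 0 ≤ t) :
    Integrable (fun x => Φ (t * f x)) μ := by
  have hmeas : AEStronglyMeasurable (fun x => Φ (t * f x)) μ :=
    hΦ.continuous.comp_aestronglyMeasurable (hf.const_mul t)
  have hΦt : ∀ x, ‖Φ (t * f x)‖ = Φ (t * f x) := fun x =>
    norm_of_nonneg (hΦ.nonneg _ (mul_nonneg ht (hf0 x)))
  rcases le_total t 1 with h1 | h1
  · refine hint.mono hmeas (.of_forall fun x => ?_)
    rw [hΦt, norm_of_nonneg (hΦ.nonneg _ (hf0 x))]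
    calc Φ (t * f x) ≤ t * Φ (f x) :=
          hΦ.convexOn.map_smul_le_of_map_zero self_mem_Ici hΦ.map_zero (hf0 x) ht h1
      _ ≤ Φ (f x) := mul_le_of_le_one_left (hΦ.nonneg _ (hf0 x)) h1
  · refine (hint.const_mul (t ^ p)).mono hmeas (.of_forall fun x => ?_)
    rw [hΦt, norm_of_nonneg (mul_nonneg (rpow_nonneg ht _) (hΦ.nonneg _ (hf0 x)))]
    exact hΦ.le_rpow_mul t (f x) h1 (hf0 x)

theorem convexOn_integral_comp_const_mul (hconv : ConvexOn ℝ (Ici 0) Φ) (hf0 : ∀ x, 0 ≤ f x)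
    (hint : ∀ t, 0 ≤ t → Integrable (fun x => Φ (t * f x)) μ) :
    ConvexOn ℝ (Ici 0) fun t => ∫ x, Φ (t * f x) ∂μ :=
  integral_convexOn_of_integrand_ae (convex_Ici 0) (.of_forall fun x =>
    (hconv.comp_linearMap (LinearMap.id.smulRight (f x))).subset
      (fun _ ht => mul_nonneg ht (hf0 x)) (convex_Ici 0)) hint

theorem tendsto_integral_comp_const_mul_atTop (hconv : ConvexOn ℝ (Ici 0) Φ) (hΦ0 : Φ 0 = 0)
    (hf0 : ∀ x, 0 ≤ f x) (hint : ∀ t, 0 ≤ t → Integrable (fun x => Φ (t * f x)) μ)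
    (hpos : 0 < ∫ x, Φ (f x) ∂μ) :
    Tendsto (fun t => ∫ x, Φ (t * f x) ∂μ) atTop atTop := by
  refine tendsto_atTop_mono' _ ?_ (tendsto_id.atTop_mul_const hpos)
  filter_upwards [eventually_ge_atTop 1] with t ht
  have ht0 : 0 < t := one_pos.trans_le ht
  rw [id, ← integral_const_mul]
  have hint1 : Integrable (fun x => Φ (f x)) μ := by simpa using hint 1 zero_le_one
  refine integral_mono (hint1.const_mul t) (hint t ht0.le) fun x => ?_
  have h := hconv.map_smul_le_of_map_zero self_mem_Ici hΦ0 (mul_nonneg ht0.le (hf0 x))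
    (inv_nonneg.2 ht0.le) (inv_le_one_of_one_le₀ ht)
  rw [smul_eq_mul, inv_mul_cancel_left₀ ht0.ne'] at h
  exact (le_inv_mul_iff₀ ht0).mp h

end IntegralOfComposition

theorem strictConvexOn_const_mul_rpow_of_neg {c p : ℝ} (hc : 0 < c) (hp : p < 0) :
    StrictConvexOn ℝ (Ioi 0) fun t : ℝ => c * t ^ p := by
  refine StrictMonoOn.strictConvexOn_of_deriv (convex_Ioi 0)
    (continuousOn_const.mul (continuousOn_id.rpow_const fun t ht => Or.inl (ne_of_gt ht))) ?_
  rw [interior_Ioi]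
  intro x hx y hy hxy
  simp only [deriv_const_mul_field', Real.deriv_rpow_const]
  have : y ^ (p - 1) < x ^ (p - 1) := (rpow_lt_rpow_iff_of_neg hy hx (by linarith)).mpr hxy
  have : p * x ^ (p - 1) < p * y ^ (p - 1) := mul_lt_mul_of_neg_left this hp
  gcongr

theorem StrictConvexOn.existsUnique_forall_le_of_tendsto {f : ℝ → ℝ}
    (hf : StrictConvexOn ℝ (Ioi 0) f) (h0 : Tendsto f (𝓝[>] 0) atTop)
    (hinf : Tendsto f atTop atTop) : ∃! t, 0 < t ∧ ∀ s, 0 < s → f t ≤ f s := by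
  have hcont : Continuous (f ∘ exp) :=
    (hf.convexOn.continuousOn isOpen_Ioi).comp_continuous continuous_exp exp_pos
  have hcocompact : Tendsto (f ∘ exp) (cocompact ℝ) atTop := by
    rw [cocompact_eq_atBot_atTop, tendsto_sup]
    exact ⟨h0.comp tendsto_exp_atBot_nhdsGT, hinf.comp tendsto_exp_atTop⟩
  obtain ⟨x, hx⟩ := hcont.exists_forall_le hcocompact
  have hmin : ∀ s, 0 < s → f (exp x) ≤ f s := fun s hs => by
    simpa [exp_log hs] using hx (log s)
  exact ⟨exp x, ⟨exp_pos x, hmin⟩, fun t ⟨ht, htmin⟩ =>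
    hf.eq_of_isMinOn (fun s hs => htmin s hs) (fun s hs => hmin s hs) ht (exp_pos x)⟩

theorem strictConvexOn_tendsto_atTop_and_existsUnique_min_sigma_general
    {Ω : Type*} [MeasurableSpace Ω] (μ : Measure Ω)
    (φ φ' : ℝ → ℝ) (am ap : ℝ)
    (hmono : StrictMono φ)
    (hcont : Continuous φ)
    (hpos : ∀ t : ℝ, 0 < t → 0 < φ t)
    (hderiv : ∀ t : ℝ, 0 < t → HasDerivAt φ (φ' t) t)
    (hratio : ∀ t : ℝ, 0 < t → am ≤ t * φ' t / φ t ∧ t * φ' t / φ t ≤ ap)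
    (Φ : ℝ → ℝ) (hΦ : ∀ t : ℝ, Φ t = ∫ s in (0:ℝ)..|t|, φ s)
    (g : Ω → ℝ) (hg : Measurable g)
    (hgint : Integrable (fun x => Φ |g x|) μ)
    (hgpos : 0 < ∫ x, Φ |g x| ∂μ)
    (B δ : ℝ) (hB : 0 < B) (hδ : 1 < δ)
    (σ : ℝ → ℝ)
    (hσ : ∀ t : ℝ, σ t = (∫ x, Φ (t * |g x|) ∂μ) + (B / (δ - 1)) * t ^ (1 - δ)) :
    StrictConvexOn ℝ (Ioi (0:ℝ)) σ ∧
    Tendsto σ (𝓝[>] (0:ℝ)) atTop ∧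
    Tendsto σ atTop atTop ∧
    ∃! tstar : ℝ, 0 < tstar ∧ ∀ t : ℝ, 0 < t → σ tstar ≤ σ t := by
  have hΦY : IsDeltaTwoYoungFunction Φ (ap + 1) := by
    rw [funext hΦ]
    exact isDeltaTwoYoungFunction_primitive_abs hmono.monotone hcont hpos hderiv
      fun t ht => (hratio t ht).2
  have hint : ∀ t, 0 ≤ t → Integrable (fun x => Φ (t * |g x|)) μ := fun t ht =>
    hΦY.integrable_comp_const_mul hg.abs.aestronglyMeasurable (fun x => abs_nonneg _) hgint ht
  have hp : 1 - δ < 0 := by linarith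
  have hc : 0 < B / (δ - 1) := div_pos hB (by linarith)
  set I : ℝ → ℝ := fun t => ∫ x, Φ (t * |g x|) ∂μ
  set P : ℝ → ℝ := fun t => B / (δ - 1) * t ^ (1 - δ)
  obtain rfl : σ = I + P := funext hσ
  have hconv : StrictConvexOn ℝ (Ioi 0) (I + P) :=
    ((convexOn_integral_comp_const_mul hΦY.convexOn (fun x => abs_nonneg _) hint).subset
      Ioi_subset_Ici_self (convex_Ioi 0)).add_strictConvexOn
      (strictConvexOn_const_mul_rpow_of_neg hc hp)
  have hzero : Tendsto (I + P) (𝓝[>] 0) atTop := tendsto_atTop_add_left_of_le' _ 0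
    (eventually_nhdsWithin_of_forall fun t (ht : 0 < t) =>
      integral_nonneg fun x => hΦY.nonneg _ (mul_nonneg ht.le (abs_nonneg _)))
    ((tendsto_rpow_neg_nhdsGT_zero hp).const_mul_atTop hc)
  have htop : Tendsto (I + P) atTop atTop := tendsto_atTop_add_right_of_le' _ 0
    (tendsto_integral_comp_const_mul_atTop hΦY.convexOn hΦY.map_zero (fun x => abs_nonneg _)
      hint hgpos)
    ((eventually_gt_atTop 0).mono fun t ht => mul_nonneg hc.le (rpow_nonneg ht.le _))
  exact ⟨hconv, hzero, htop, hconv.existsUnique_forall_le_of_tendsto hzero htop⟩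

/-- (Abstract form of Lemma 4.1.)  Under hypotheses (φ0)–(φ1),
for measurable `g` with `0 < ∫ Φ(|g|) dμ < ∞` and constants `B > 0`, `δ > 1`, the
function `σ(t) = ∫ Φ(t|g|) dμ + (B/(δ-1))·t^(1-δ)` is strictly convex on `(0,∞)`,
tends to `∞` as `t → 0⁺` and as `t → ∞`, and attains its global minimum over
`(0,∞)` at a unique point `t⋆ > 0`.  Here `Φ t = ∫ s in 0..|t|, φ s` and
`a₋, a₊` are written `am, ap`. -/
theorem strictConvexOn_tendsto_atTop_and_existsUnique_min_sigma
    {Ω : Type*} [MeasurableSpace Ω] (μ : Measure Ω)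
    (φ φ' : ℝ → ℝ) (am ap : ℝ)
    (hodd : ∀ t : ℝ, φ (-t) = -φ t)
    (hmono : StrictMono φ)
    (hcont : Continuous φ)
    (hsurj : Function.Surjective φ)
    (hpos : ∀ t : ℝ, 0 < t → 0 < φ t)
    (hderiv : ∀ t : ℝ, 0 < t → HasDerivAt φ (φ' t) t)
    (ham : 0 < am) (hamap : am ≤ ap)
    (hratio : ∀ t : ℝ, 0 < t → am ≤ t * φ' t / φ t ∧ t * φ' t / φ t ≤ ap)
    (Φ : ℝ → ℝ) (hΦ : ∀ t : ℝ, Φ t = ∫ s in (0:ℝ)..|t|, φ s)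
    (g : Ω → ℝ) (hg : Measurable g)
    (hgint : Integrable (fun x => Φ |g x|) μ)
    (hgpos : 0 < ∫ x, Φ |g x| ∂μ)
    (B δ : ℝ) (hB : 0 < B) (hδ : 1 < δ)
    (σ : ℝ → ℝ)
    (hσ : ∀ t : ℝ, σ t = (∫ x, Φ (t * |g x|) ∂μ) + (B / (δ - 1)) * t ^ (1 - δ)) :
    StrictConvexOn ℝ (Ioi (0:ℝ)) σ ∧
    Tendsto σ (𝓝[>] (0:ℝ)) atTop ∧
    Tendsto σ atTop atTop ∧
    ∃! tstar : ℝ, 0 < tstar ∧ ∀ t : ℝ, 0 < t → σ tstar ≤ σ t :=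
  strictConvexOn_tendsto_atTop_and_existsUnique_min_sigma_general μ φ φ' am ap hmono hcont hpos
    hderiv hratio Φ hΦ g hg hgint hgpos B δ hB hδ σ hσ
end

section
/- There exists a unique t_* > 0 such that ∫_Ω φ(t_*|g|)·|g| dμ = B·t_*^{−δ}; moreover, for every t ≥ t_* one has ∫_Ω φ(t|g|)·|g| dμ ≥ B·t^{−δ} (abstract form of the paper's Lemma 4.1: the Nehari-type sets 𝒩* and 𝒩 are nonempty and 𝒩 contains the whole ray {t·g : t ≥ t_*}). -/
open MeasureTheory Set Filter Topology Real

/-!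
`F t = ∫ φ(t|g|)|g| dμ` is nondecreasing in `t` because `φ` is, while `B t^(-δ)` is strictly
decreasing, so `F t - B t^(-δ)` is strictly increasing on `(0, ∞)`: it has at most one zero, and
is nonnegative beyond it. The index bound `t φ'(t) ≤ a₊ φ(t)` integrates to
`s φ(s) ≤ (a₊ + 1) Φ(s)`, hence to the growth bound `Φ(l s) ≤ l^(a₊+1) Φ(s)` for `l ≥ 1`; together
they dominate `φ(t|g|)|g|` by a multiple of `Φ(|g|)`, so `F` is finite and continuous. Since
`F 1 ≥ ∫ Φ(|g|) > 0`, the intermediate value theorem produces the zero.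
-/

section Primitive

variable {φ : ℝ → ℝ}

lemma nonneg_of_continuous_of_pos (hcont : Continuous φ) (hpos : ∀ t, 0 < t → 0 < φ t)
    {t : ℝ} (ht : 0 ≤ t) : 0 ≤ φ t := by
  have hclosed : IsClosed {t | 0 ≤ φ t} := isClosed_le continuous_const hcont
  have hsub : Ioi (0 : ℝ) ⊆ {t | 0 ≤ φ t} := fun t ht => (hpos t ht).le
  exact hclosed.closure_subset_iff.2 hsub (by rwa [closure_Ioi])

lemma integral_le_mul_of_monotone (hmono : Monotone φ) {s : ℝ} (hs : 0 ≤ s) :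
    ∫ u in (0 : ℝ)..s, φ u ≤ s * φ s := by
  calc ∫ u in (0 : ℝ)..s, φ u ≤ ∫ _ in (0 : ℝ)..s, φ s :=
        intervalIntegral.integral_mono_on hs (hmono.intervalIntegrable) intervalIntegrable_const
          fun u hu => hmono hu.2
    _ = s * φ s := by simp

lemma mul_le_mul_integral_of_ratio_le {φ' : ℝ → ℝ} {a : ℝ} (hcont : Continuous φ)
    (hpos : ∀ t, 0 < t → 0 < φ t) (hderiv : ∀ t, 0 < t → HasDerivAt φ (φ' t) t)
    (hratio : ∀ t, 0 < t → t * φ' t / φ t ≤ a) {s : ℝ} (hs : 0 ≤ s) :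
    s * φ s ≤ (a + 1) * ∫ u in (0 : ℝ)..s, φ u := by
  set ψ : ℝ → ℝ := fun u => (a + 1) * (∫ v in (0 : ℝ)..u, φ v) - u * φ u
  have hψ : ∀ u, 0 < u → HasDerivAt ψ ((a + 1) * φ u - (1 * φ u + u * φ' u)) u := fun u hu =>
    ((hcont.integral_hasStrictDerivAt 0 u).hasDerivAt.const_mul (a + 1)).sub
      ((hasDerivAt_id u).mul (hderiv u hu))
  have hψmono : MonotoneOn ψ (Ici 0) := by
    refine monotoneOn_of_deriv_nonneg (convex_Ici 0) ?_ ?_ ?_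
    · have hprim : Continuous fun u => ∫ v in (0 : ℝ)..u, φ v := continuous_iff_continuousAt.2
        fun u => (hcont.integral_hasStrictDerivAt 0 u).hasDerivAt.continuousAt
      exact ((continuous_const.mul hprim).sub (continuous_id.mul hcont)).continuousOn
    · rw [interior_Ici]
      exact fun u hu => (hψ u hu).differentiableAt.differentiableWithinAt
    · rw [interior_Ici]
      intro u hu
      have hr := hratio u hu
      rw [div_le_iff₀ (hpos u hu)] at hr
      rw [(hψ u hu).deriv]
      linarith
  have := hψmono self_mem_Ici hs hs
  simp only [ψ, intervalIntegral.integral_same, mul_zero, zero_mul, sub_zero] at this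
  linarith

lemma integral_mul_le_rpow_mul_integral {p : ℝ} (hcont : Continuous φ)
    (hgrowth : ∀ s, 0 ≤ s → s * φ s ≤ p * ∫ u in (0 : ℝ)..s, φ u) {l s : ℝ} (hl : 1 ≤ l)
    (hs : 0 ≤ s) : ∫ u in (0 : ℝ)..l * s, φ u ≤ l ^ p * ∫ u in (0 : ℝ)..s, φ u := by
  set G : ℝ → ℝ := fun u => (∫ v in (0 : ℝ)..u * s, φ v) * u ^ (-p)
  have hG : ∀ u, 0 < u → HasDerivAt G
      (φ (u * s) * s * u ^ (-p) + (∫ v in (0 : ℝ)..u * s, φ v) * (-p * u ^ (-p - 1))) u := by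
    intro u hu
    have hprim : HasDerivAt (fun v => ∫ w in (0 : ℝ)..v * s, φ w) (φ (u * s) * s) u := by
      simpa [Function.comp_def] using
        (hcont.integral_hasStrictDerivAt 0 (u * s)).hasDerivAt.comp u
          ((hasDerivAt_id u).mul_const s)
    exact hprim.mul (hasDerivAt_rpow_const (Or.inl hu.ne'))
  -- `G' u = u ^ (-p - 1) * (u s φ (u s) - p ∫₀^{us} φ)`, which `hgrowth` makes nonpositive.
  have hGanti : AntitoneOn G (Ici 1) := by
    refine antitoneOn_of_deriv_nonpos (convex_Ici 1) ?_ ?_ ?_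
    · exact fun u hu => (hG u (one_pos.trans_le hu)).continuousAt.continuousWithinAt
    · rw [interior_Ici]
      exact fun u hu => (hG u (one_pos.trans hu)).differentiableAt.differentiableWithinAt
    · rw [interior_Ici]
      intro u hu
      have hu0 : 0 < u := one_pos.trans hu
      have hsplit : u ^ (-p) = u * u ^ (-p - 1) := by
        rw [rpow_sub_one hu0.ne']; field_simp
      have := mul_le_mul_of_nonneg_right (hgrowth (u * s) (by positivity))
        (rpow_nonneg hu0.le (-p - 1))
      rw [(hG u hu0).deriv, hsplit]
      nlinarith
  have hle := hGanti self_mem_Ici hl hl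
  simp only [G, one_mul, one_rpow, mul_one] at hle
  have hlp : 0 < l ^ p := rpow_pos_of_pos (one_pos.trans_le hl) p
  rw [rpow_neg (one_pos.trans_le hl).le, ← div_eq_mul_inv, div_le_iff₀ hlp] at hle
  linarith

lemma apply_mul_mul_le {p : ℝ} (hcont : Continuous φ) (hnonneg : ∀ t, 0 ≤ t → 0 ≤ φ t)
    (hp : 0 ≤ p) (hgrowth : ∀ s, 0 ≤ s → s * φ s ≤ p * ∫ u in (0 : ℝ)..s, φ u) {t s : ℝ}
    (ht : 0 < t) (hs : 0 ≤ s) :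
    φ (t * s) * s ≤ p / t * max t 1 ^ p * ∫ u in (0 : ℝ)..s, φ u := by
  have hmono : ∫ u in (0 : ℝ)..t * s, φ u ≤ ∫ u in (0 : ℝ)..max t 1 * s, φ u :=
    intervalIntegral.integral_mono_interval le_rfl (by positivity)
      (mul_le_mul_of_nonneg_right (le_max_left t 1) hs)
      ((ae_restrict_mem measurableSet_Ioc).mono fun u hu => hnonneg u hu.1.le)
      (hcont.intervalIntegrable _ _)
  have hdouble := integral_mul_le_rpow_mul_integral hcont hgrowth (le_max_right t 1) hs
  have hgrow := hgrowth (t * s) (by positivity)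
  rw [div_mul_eq_mul_div, div_mul_eq_mul_div, le_div_iff₀ ht]
  calc φ (t * s) * s * t = t * s * φ (t * s) := by ring
    _ ≤ p * ∫ u in (0 : ℝ)..t * s, φ u := hgrow
    _ ≤ p * (max t 1 ^ p * ∫ u in (0 : ℝ)..s, φ u) :=
        mul_le_mul_of_nonneg_left (hmono.trans hdouble) hp
    _ = _ := by ring

end Primitive

section Crossing

variable {F : ℝ → ℝ} {B δ : ℝ}

lemma strictMonoOn_sub_mul_rpow_neg (hF : MonotoneOn F (Ioi 0)) (hB : 0 < B) (hδ : 0 < δ) :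
    StrictMonoOn (fun t => F t - B * t ^ (-δ)) (Ioi 0) := fun s hs t ht hst => by
  have hpow := strictAntiOn_rpow_Ioi_of_exponent_neg (neg_lt_zero.2 hδ) hs ht hst
  have := hF hs ht hst.le
  dsimp only
  nlinarith

lemma exists_eq_mul_rpow_neg (hF : MonotoneOn F (Ioi 0)) (hcont : ContinuousOn F (Ioi 0))
    (hF1 : 0 < F 1) (hB : 0 < B) (hδ : 0 < δ) : ∃ t₀, 0 < t₀ ∧ F t₀ = B * t₀ ^ (-δ) := by
  -- `R` is where `B * t ^ (-δ)` meets the level `F 1`.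
  set R := (F 1 / B) ^ (-δ⁻¹)
  have hR : 0 < R := rpow_pos_of_pos (div_pos hF1 hB) _
  have hRδ : B * R ^ (-δ) = F 1 := by
    rw [← rpow_mul (div_pos hF1 hB).le, neg_mul_neg, inv_mul_cancel₀ hδ.ne', rpow_one]
    field_simp
  have hpow_anti : ∀ {s t : ℝ}, 0 < s → s ≤ t → B * t ^ (-δ) ≤ B * s ^ (-δ) := fun hs hst =>
    mul_le_mul_of_nonneg_left ((antitoneOn_rpow_Ioi_of_exponent_nonpos (neg_nonpos.2 hδ.le))
      hs (hs.trans_le hst) hst) hB.le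
  set ε := min 1 R
  set T := max 1 R
  have hε : 0 < ε := lt_min one_pos hR
  have hεT : ε ≤ T := (min_le_left 1 R).trans (le_max_left 1 R)
  have hlow : F ε - B * ε ^ (-δ) ≤ 0 := by
    have := hF hε (mem_Ioi.2 one_pos) (min_le_left 1 R)
    have := hpow_anti hε (min_le_right 1 R)
    linarith
  have hhigh : 0 ≤ F T - B * T ^ (-δ) := by
    have := hF (mem_Ioi.2 one_pos) (hε.trans_le hεT) (le_max_left 1 R)
    have := hpow_anti hR (le_max_right 1 R)
    linarith
  have hcontG : ContinuousOn (fun t => F t - B * t ^ (-δ)) (Icc ε T) := by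
    refine ContinuousOn.mono ?_ fun t ht => hε.trans_le ht.1
    exact hcont.sub (continuousOn_const.mul
      (continuousOn_id.rpow_const fun t ht => Or.inl (ne_of_gt ht)))
  obtain ⟨t₀, ht₀, hzero⟩ := intermediate_value_Icc hεT hcontG ⟨hlow, hhigh⟩
  exact ⟨t₀, hε.trans_le ht₀.1, sub_eq_zero.1 hzero⟩

theorem existsUnique_eq_mul_rpow_neg (hF : MonotoneOn F (Ioi 0))
    (hcont : ContinuousOn F (Ioi 0)) (hF1 : 0 < F 1) (hB : 0 < B) (hδ : 0 < δ) :
    ∃ t₀, 0 < t₀ ∧ F t₀ = B * t₀ ^ (-δ) ∧ (∀ t, 0 < t → F t = B * t ^ (-δ) → t = t₀) ∧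
      ∀ t, t₀ ≤ t → B * t ^ (-δ) ≤ F t := by
  obtain ⟨t₀, ht₀, heq⟩ := exists_eq_mul_rpow_neg hF hcont hF1 hB hδ
  have hG := strictMonoOn_sub_mul_rpow_neg hF hB hδ
  refine ⟨t₀, ht₀, heq, fun t ht hteq => hG.injOn ht ht₀ ?_, fun t ht => ?_⟩
  · simp only [hteq, heq, sub_self]
  · have := hG.monotoneOn ht₀ (ht₀.trans_le ht) ht
    simp only [heq, sub_self] at this
    linarith

end Crossing

section ModularDeriv

variable {Ω : Type*} [MeasurableSpace Ω] {μ : Measure Ω} {φ : ℝ → ℝ} {g : Ω → ℝ}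

lemma continuousOn_integral_apply_mul_abs (hcont : Continuous φ) (hmono : Monotone φ)
    (hnonneg : ∀ t, 0 ≤ t → 0 ≤ φ t)
    (hint : ∀ t, 0 < t → Integrable (fun x => φ (t * |g x|) * |g x|) μ) :
    ContinuousOn (fun t => ∫ x, φ (t * |g x|) * |g x| ∂μ) (Ioi 0) := by
  intro t (ht : 0 < t)
  refine (continuousAt_of_dominated ?_ ?_ (hint (2 * t) (by positivity)) ?_).continuousWithinAt
  · filter_upwards [Ioi_mem_nhds ht] with s hs using (hint s hs).aestronglyMeasurable
  · filter_upwards [Ioo_mem_nhds ht (by linarith : t < 2 * t)] with s hs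
    refine ae_of_all _ fun x => ?_
    have hgx := abs_nonneg (g x)
    rw [norm_of_nonneg (mul_nonneg (hnonneg _ (mul_nonneg hs.1.le hgx)) hgx)]
    exact mul_le_mul_of_nonneg_right (hmono (mul_le_mul_of_nonneg_right hs.2.le hgx)) hgx
  · exact ae_of_all _ fun x =>
      ((hcont.comp (continuous_mul_const _)).mul continuous_const).continuousAt

lemma monotoneOn_integral_apply_mul_abs (hmono : Monotone φ)
    (hint : ∀ t, 0 < t → Integrable (fun x => φ (t * |g x|) * |g x|) μ) :
    MonotoneOn (fun t => ∫ x, φ (t * |g x|) * |g x| ∂μ) (Ioi 0) := fun s hs t ht hst =>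
  integral_mono (hint s hs) (hint t ht) fun _ =>
    mul_le_mul_of_nonneg_right (hmono (mul_le_mul_of_nonneg_right hst (abs_nonneg _)))
      (abs_nonneg _)

lemma integrable_apply_mul_abs {p : ℝ} (hcont : Continuous φ) (hnonneg : ∀ t, 0 ≤ t → 0 ≤ φ t)
    (hp : 0 ≤ p) (hgrowth : ∀ s, 0 ≤ s → s * φ s ≤ p * ∫ u in (0 : ℝ)..s, φ u)
    (hg : Measurable g) (hgint : Integrable (fun x => ∫ u in (0 : ℝ)..|g x|, φ u) μ)
    {t : ℝ} (ht : 0 < t) : Integrable (fun x => φ (t * |g x|) * |g x|) μ := by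
  refine (hgint.const_mul (p / t * max t 1 ^ p)).mono'
    ((hcont.measurable.comp (measurable_const.mul hg.abs)).mul hg.abs).aestronglyMeasurable
    (ae_of_all _ fun x => ?_)
  have hgx := abs_nonneg (g x)
  rw [norm_of_nonneg (mul_nonneg (hnonneg _ (mul_nonneg ht.le hgx)) hgx)]
  exact apply_mul_mul_le hcont hnonneg hp hgrowth ht hgx

end ModularDeriv

theorem existsUnique_nehari_point_and_ray_in_nehari_set_general
    {Ω : Type*} [MeasurableSpace Ω] (μ : Measure Ω)
    (φ φ' : ℝ → ℝ) (am ap : ℝ)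
    (hmono : StrictMono φ)
    (hcont : Continuous φ)
    (hpos : ∀ t : ℝ, 0 < t → 0 < φ t)
    (hderiv : ∀ t : ℝ, 0 < t → HasDerivAt φ (φ' t) t)
    (ham : 0 < am) (hamap : am ≤ ap)
    (hratio : ∀ t : ℝ, 0 < t → am ≤ t * φ' t / φ t ∧ t * φ' t / φ t ≤ ap)
    (Φ : ℝ → ℝ) (hΦ : ∀ t : ℝ, Φ t = ∫ s in (0:ℝ)..|t|, φ s)
    (g : Ω → ℝ) (hg : Measurable g)
    (hgint : Integrable (fun x => Φ |g x|) μ)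
    (hgpos : 0 < ∫ x, Φ |g x| ∂μ)
    (B δ : ℝ) (hB : 0 < B) (hδ : 1 < δ) :
    ∃ tstar : ℝ, 0 < tstar ∧
      (∫ x, φ (tstar * |g x|) * |g x| ∂μ) = B * tstar ^ (-δ) ∧
      (∀ t : ℝ, 0 < t → (∫ x, φ (t * |g x|) * |g x| ∂μ) = B * t ^ (-δ) → t = tstar) ∧
      (∀ t : ℝ, tstar ≤ t → B * t ^ (-δ) ≤ ∫ x, φ (t * |g x|) * |g x| ∂μ) := by
  have hnonneg : ∀ t, 0 ≤ t → 0 ≤ φ t := fun t => nonneg_of_continuous_of_pos hcont hpos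
  have hgrowth : ∀ s, 0 ≤ s → s * φ s ≤ (ap + 1) * ∫ u in (0 : ℝ)..s, φ u := fun s =>
    mul_le_mul_integral_of_ratio_le hcont hpos hderiv (fun t ht => (hratio t ht).2)
  have hΦg : ∀ x, Φ |g x| = ∫ u in (0 : ℝ)..|g x|, φ u := fun x => by rw [hΦ, abs_abs]
  simp only [hΦg] at hgint hgpos
  have hint : ∀ t, 0 < t → Integrable (fun x => φ (t * |g x|) * |g x|) μ := fun t =>
    integrable_apply_mul_abs hcont hnonneg (by linarith) hgrowth hg hgint
  have hF1 : 0 < ∫ x, φ (1 * |g x|) * |g x| ∂μ := by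
    refine hgpos.trans_le (integral_mono hgint (hint 1 one_pos) fun x => ?_)
    simpa [mul_comm] using integral_le_mul_of_monotone hmono.monotone (abs_nonneg (g x))
  exact existsUnique_eq_mul_rpow_neg (monotoneOn_integral_apply_mul_abs hmono.monotone hint)
    (continuousOn_integral_apply_mul_abs hcont hmono.monotone hnonneg hint) hF1 hB (by linarith)

/-- (Abstract form of Lemma 4.1: the Nehari-type sets `𝒩*` and `𝒩`
are nonempty.)  Under hypotheses (φ0)–(φ1), for measurable `g` with
`0 < ∫ Φ(|g|) dμ < ∞` and constants `B > 0`, `δ > 1`, there exists a unique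
`t⋆ > 0` with `∫ φ(t⋆|g|)·|g| dμ = B · t⋆^(-δ)`, and moreover
`∫ φ(t|g|)·|g| dμ ≥ B · t^(-δ)` for every `t ≥ t⋆`.
Here `Φ t = ∫ s in 0..|t|, φ s` and `a₋, a₊` are written `am, ap`. -/
theorem existsUnique_nehari_point_and_ray_in_nehari_set
    {Ω : Type*} [MeasurableSpace Ω] (μ : Measure Ω)
    (φ φ' : ℝ → ℝ) (am ap : ℝ)
    (hodd : ∀ t : ℝ, φ (-t) = -φ t)
    (hmono : StrictMono φ)
    (hcont : Continuous φ)
    (hsurj : Function.Surjective φ)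
    (hpos : ∀ t : ℝ, 0 < t → 0 < φ t)
    (hderiv : ∀ t : ℝ, 0 < t → HasDerivAt φ (φ' t) t)
    (ham : 0 < am) (hamap : am ≤ ap)
    (hratio : ∀ t : ℝ, 0 < t → am ≤ t * φ' t / φ t ∧ t * φ' t / φ t ≤ ap)
    (Φ : ℝ → ℝ) (hΦ : ∀ t : ℝ, Φ t = ∫ s in (0:ℝ)..|t|, φ s)
    (g : Ω → ℝ) (hg : Measurable g)
    (hgint : Integrable (fun x => Φ |g x|) μ)
    (hgpos : 0 < ∫ x, Φ |g x| ∂μ)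
    (B δ : ℝ) (hB : 0 < B) (hδ : 1 < δ) :
    ∃ tstar : ℝ, 0 < tstar ∧
      (∫ x, φ (tstar * |g x|) * |g x| ∂μ) = B * tstar ^ (-δ) ∧
      (∀ t : ℝ, 0 < t → (∫ x, φ (t * |g x|) * |g x| ∂μ) = B * t ^ (-δ) → t = tstar) ∧
      (∀ t : ℝ, tstar ≤ t → B * t ^ (-δ) ≤ ∫ x, φ (t * |g x|) * |g x| ∂μ) :=
  existsUnique_nehari_point_and_ray_in_nehari_set_general μ φ φ' am ap hmono hcont hpos hderiv ham
    hamap hratio Φ hΦ g hg hgint hgpos B δ hB hδ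
end
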